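/- arXiv:2108.01157 — 2 statements merged into one kernel-verified Lean document; each statement's English description precedes it below -/
import Mathlib

section
/- Let V be a right Banach ℍ-module, T ∈ B(V) and n ≥ 1 a natural number. Then σ_e^S(T^n) = { q^n : q ∈ σ_e^S(T) }. -/
/-!
Quaternionic setting: `ℍ` is the real quaternions.  A right Banach `ℍ`-module is
formalized as a real Banach space `V` together with a compatible `Module ℍᵐᵒᵖ V`
structure (right `ℍ`-action) satisfying `‖x • q‖ = ‖x‖ * |q|`; bounded right
`ℍ`-linear operators are the continuous `ℍᵐᵒᵖ`-linear maps `V →L[ℍᵐᵒᵖ] V`.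
-/

open MulOpposite

notation "ℍ" => Quaternion ℝ

section Defs

variable {W : Type*} [NormedAddCommGroup W] [Module ℍᵐᵒᵖ W] [Module ℝ W]
  [SMulCommClass ℍᵐᵒᵖ ℝ W] [ContinuousConstSMul ℝ W]

/-- `Q_q(T) = T² − 2 Re(q) T + |q|² I`. -/
noncomputable def Qs (T : W →L[ℍᵐᵒᵖ] W) (q : ℍ) : W →L[ℍᵐᵒᵖ] W :=
  T * T - (2 * q.re) • T + (‖q‖ ^ 2) • (1 : W →L[ℍᵐᵒᵖ] W)

/-- The S-resolvent set: `q` such that `Q_q(T)` is bijective with bounded inverse,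
i.e. invertible in the ring `B(W)`. -/
noncomputable def sResolvent (T : W →L[ℍᵐᵒᵖ] W) : Set ℍ :=
  {q | IsUnit (Qs T q)}

/-- The S-spectrum `σ_S(T) = ℍ \ ρ_S(T)`. -/
noncomputable def sSpectrum (T : W →L[ℍᵐᵒᵖ] W) : Set ℍ :=
  {q | ¬ IsUnit (Qs T q)}

/-- A compact operator: the image of the closed unit ball is relatively compact. -/
def IsCompactOp (K : W →L[ℍᵐᵒᵖ] W) : Prop :=
  IsCompact (closure (⇑K '' Metric.closedBall (0 : W) 1))

/-- `S` is a quasi-inverse of `T` if `S T = I - K₁` and `T S = I - K₂` with `K₁, K₂` compact. -/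
def IsQuasiInverse (S T : W →L[ℍᵐᵒᵖ] W) : Prop :=
  ∃ K₁ K₂ : W →L[ℍᵐᵒᵖ] W, IsCompactOp K₁ ∧ IsCompactOp K₂ ∧
    S * T = 1 - K₁ ∧ T * S = 1 - K₂

/-- The essential S-spectrum: `q` such that `Q_q(T)` admits no quasi-inverse. -/
noncomputable def essSpectrum (T : W →L[ℍᵐᵒᵖ] W) : Set ℍ :=
  {q | ¬ ∃ S : W →L[ℍᵐᵒᵖ] W, IsQuasiInverse S (Qs T q)}

/-- The Weyl S-spectrum: `⋂ σ_S(T + K)` over all compact `K`. -/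
noncomputable def weylSpectrum (T : W →L[ℍᵐᵒᵖ] W) : Set ℍ :=
  ⋂ K ∈ {K : W →L[ℍᵐᵒᵖ] W | IsCompactOp K}, sSpectrum (T + K)

/-- The 2-sphere `[q] = {h q h⁻¹ : h ∈ ℍ \ {0}}`. -/
def qSphere (q : ℍ) : Set ℍ := {p | ∃ h : ℍ, h ≠ 0 ∧ p = h * q * h⁻¹}

/-- Minimum modulus `μ(T) = inf {‖T x‖ : ‖x‖ = 1}`. -/
noncomputable def muMin (T : W →L[ℍᵐᵒᵖ] W) : ℝ :=
  sInf {c : ℝ | ∃ x : W, ‖x‖ = 1 ∧ c = ‖T x‖}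

/-- Operator norm of a bounded right `ℍ`-linear operator. -/
noncomputable def opNorm (T : W →L[ℍᵐᵒᵖ] W) : ℝ :=
  sInf {c : ℝ | 0 ≤ c ∧ ∀ x : W, ‖T x‖ ≤ c * ‖x‖}

/-- Restriction of `T` to an invariant submodule. -/
noncomputable def restrictOp (T : W →L[ℍᵐᵒᵖ] W) (M : Submodule ℍᵐᵒᵖ W)
    (h : ∀ x ∈ M, T x ∈ M) : ↥M →L[ℍᵐᵒᵖ] ↥M where
  toLinearMap := (T : W →ₗ[ℍᵐᵒᵖ] W).restrict h
  cont := Continuous.subtype_mk (T.continuous.comp continuous_subtype_val) _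

end Defs

section Sub

variable {V : Type*} [NormedAddCommGroup V] [NormedSpace ℝ V]
  [Module ℍᵐᵒᵖ V] [IsScalarTower ℝ ℍᵐᵒᵖ V] [SMulCommClass ℍᵐᵒᵖ ℝ V]

instance (M : Submodule ℍᵐᵒᵖ V) : SMulCommClass ℍᵐᵒᵖ ℝ ↥M := by
  constructor
  intro q r x
  apply Subtype.ext
  simp only [Submodule.coe_smul_of_tower, SetLike.val_smul]
  exact smul_comm q r (x : V)

instance (M : Submodule ℍᵐᵒᵖ V) : ContinuousConstSMul ℝ ↥M := by
  constructor
  intro r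
  have h : Continuous fun x : ↥M => r • (x : V) :=
    (continuous_const_smul r).comp continuous_subtype_val
  exact Continuous.subtype_mk h _

/-- `q` is a right eigenvalue of finite type of `T`: `V` is the direct sum of two closed
`T`-invariant right `ℍ`-submodules `M₁`, `M₂` with `M₁` finite-dimensional over `ℍ`,
`σ_S(T|M₁) ∩ σ_S(T|M₂) = ∅` and `σ_S(T|M₁) = [q]`. -/
noncomputable def IsFiniteTypeEigenvalue (T : V →L[ℍᵐᵒᵖ] V) (q : ℍ) : Prop :=
  ∃ (M₁ M₂ : Submodule ℍᵐᵒᵖ V) (h₁ : ∀ x ∈ M₁, T x ∈ M₁) (h₂ : ∀ x ∈ M₂, T x ∈ M₂),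
    IsClosed (M₁ : Set V) ∧ IsClosed (M₂ : Set V) ∧ IsCompl M₁ M₂ ∧
    FiniteDimensional ℍᵐᵒᵖ ↥M₁ ∧
    sSpectrum (restrictOp T M₁ h₁) ∩ sSpectrum (restrictOp T M₂ h₂) = ∅ ∧
    sSpectrum (restrictOp T M₁ h₁) = qSphere q

end Sub

/-!
`Q_q(T)` depends on `q` only through `Re q` and `|q|`: it is `χ_z(T)` for
`χ_z = (X - z)(X - z̄) ∈ ℝ[X]` and any `z ∈ ℂ` with the same real part and modulus, and
`q ∈ σₑ(T)` iff `χ_z(T)` is not a unit of the Calkin algebra `B(V)/K(V)`. For a primitive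
`n`-th root of unity `ζ` we have `χ_{zⁿ}(Xⁿ) = ∏_{i<n} χ_{ζⁱz}` with commuting factors, so
`χ_{zⁿ}(Tⁿ)` is a unit modulo compacts iff every `χ_{ζⁱz}(T)` is. Every quaternion lies in an
isometric copy `ℝ + ℝu` of `ℂ` (`u` a unit imaginary quaternion), which also contains its
`n`-th roots.
-/

open Polynomial ComplexConjugate

theorem Quaternion.mul_self_eq_neg_one {u : ℍ} (hre : u.re = 0) (hnorm : Quaternion.normSq u = 1) :
    u * u = -1 := by
  rw [← sq, Quaternion.sq_eq_neg_normSq.2 hre, hnorm, Quaternion.coe_one]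

section ComplexLift

variable {u : ℍ} (hu : u * u = -1)

theorem Quaternion.re_liftAux (hre : u.re = 0) (z : ℂ) : (Complex.liftAux u hu z).re = z.re := by
  simp [hre]

theorem Quaternion.norm_liftAux (hre : u.re = 0) (hnorm : Quaternion.normSq u = 1) (z : ℂ) :
    ‖Complex.liftAux u hu z‖ = ‖z‖ := by
  have hnormSq : Quaternion.normSq (Complex.liftAux u hu z) = ‖z‖ ^ 2 := by
    rw [Complex.liftAux_apply, Quaternion.algebraMap_def, Quaternion.normSq_add]
    simp [Quaternion.normSq_smul, Quaternion.normSq_coe, hnorm, hre, Complex.sq_norm,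
      Complex.normSq_apply]
    ring
  rw [Quaternion.normSq_eq_norm_mul_self, ← sq] at hnormSq
  exact (pow_left_inj₀ (norm_nonneg _) (norm_nonneg _) two_ne_zero).1 hnormSq

end ComplexLift

theorem Quaternion.exists_algHom_complex_isometry (p : ℍ) :
    ∃ φ : ℂ →ₐ[ℝ] ℍ, (∀ z, (φ z).re = z.re) ∧ (∀ z, ‖φ z‖ = ‖z‖) ∧ p ∈ Set.range φ := by
  obtain ⟨u, hre, hnorm, hp⟩ : ∃ u : ℍ, u.re = 0 ∧ Quaternion.normSq u = 1 ∧ p.im = ‖p.im‖ • u := by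
    by_cases h : p.im = 0
    · exact ⟨(Complex.I : ℂ), by simp, by simp [Quaternion.normSq_def'], by simp [h]⟩
    · refine ⟨‖p.im‖⁻¹ • p.im, by simp, ?_, (smul_inv_smul₀ (norm_ne_zero_iff.2 h) _).symm⟩
      simp [Quaternion.normSq_smul, Quaternion.normSq_eq_norm_mul_self, ← sq, h]
  have hu := Quaternion.mul_self_eq_neg_one hre hnorm
  refine ⟨Complex.liftAux u hu, Quaternion.re_liftAux hu hre,
    Quaternion.norm_liftAux hu hre hnorm, ⟨p.re, ‖p.im‖⟩, ?_⟩
  rw [Complex.liftAux_apply, Quaternion.algebraMap_def, ← hp, Quaternion.re_add_im]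

noncomputable def conjQuadratic (z : ℂ) : ℝ[X] :=
  X ^ 2 - C (2 * z.re) * X + C (‖z‖ ^ 2)

theorem map_conjQuadratic (z : ℂ) :
    (conjQuadratic z).map (algebraMap ℝ ℂ) = (X - C z) * (X - C (conj z)) := by
  have hre : algebraMap ℝ ℂ (2 * z.re) = z + conj z := by
    rw [Complex.coe_algebraMap, Complex.add_conj]
  have hnorm : algebraMap ℝ ℂ (‖z‖ ^ 2) = z * conj z := by
    rw [Complex.coe_algebraMap, Complex.mul_conj, Complex.normSq_eq_norm_sq]
  rw [conjQuadratic, Polynomial.map_add, Polynomial.map_sub, Polynomial.map_mul,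
    Polynomial.map_pow, map_X, map_C, map_C, hre, hnorm, C_add, C_mul]
  ring

theorem conjQuadratic_pow_comp_X_pow {ζ : ℂ} {n : ℕ} (hζ : IsPrimitiveRoot ζ n) (hn : 0 < n)
    (z : ℂ) :
    (conjQuadratic (z ^ n)).comp (X ^ n) = ∏ i ∈ Finset.range n, conjQuadratic (ζ ^ i * z) := by
  apply map_injective (algebraMap ℝ ℂ) (algebraMap ℝ ℂ).injective
  rw [Polynomial.map_comp, Polynomial.map_prod, map_conjQuadratic, Polynomial.map_pow, map_X,
    mul_comp, sub_comp, sub_comp, X_comp, C_comp, C_comp, X_pow_sub_C_eq_prod hζ hn rfl,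
    X_pow_sub_C_eq_prod (hζ.map_of_injective (starRingEnd ℂ).injective) hn (map_pow _ z n).symm,
    ← Finset.prod_mul_distrib]
  simp only [map_conjQuadratic, map_mul, map_pow]

theorem isUnit_map_prod_iff {ι M N F : Type*} [CommMonoid M] [Monoid N] [FunLike F M N]
    [MonoidHomClass F M N] (f : F) (s : Finset ι) (g : ι → M) :
    IsUnit (f (∏ i ∈ s, g i)) ↔ ∀ i ∈ s, IsUnit (f (g i)) := by
  classical
  induction s using Finset.induction_on with
  | empty => simp
  | insert a s ha ih =>
    rw [Finset.prod_insert ha, map_mul, ((Commute.all _ _).map f).isUnit_mul_iff, ih,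
      Finset.forall_mem_insert]

section Calkin

variable (V : Type*) [NormedAddCommGroup V] [NormedSpace ℝ V]
  [Module ℍᵐᵒᵖ V] [IsScalarTower ℝ ℍᵐᵒᵖ V]

def compactOperators : Ideal (V →L[ℍᵐᵒᵖ] V) where
  carrier := {K | IsCompactOperator K}
  add_mem' := IsCompactOperator.add
  zero_mem' := isCompactOperator_zero
  smul_mem' A _ hK := hK.clm_comp A

instance : (compactOperators V).IsTwoSided :=
  ⟨fun {K} A (hK : IsCompactOperator K) => show IsCompactOperator (K ∘ A) from hK.comp_clm A⟩

variable {V}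

theorem isCompactOp_iff_isCompactOperator (K : V →L[ℍᵐᵒᵖ] V) :
    IsCompactOp K ↔ IsCompactOperator K :=
  (isCompactOperator_iff_isCompact_closure_image_closedBall
    ((K : V →ₗ[ℍᵐᵒᵖ] V).restrictScalars ℝ) zero_lt_one).symm

theorem exists_isQuasiInverse_iff_isUnit (A : V →L[ℍᵐᵒᵖ] V) :
    (∃ S, IsQuasiInverse S A) ↔ IsUnit (Ideal.Quotient.mk (compactOperators V) A) := by
  have hmk : ∀ S T : V →L[ℍᵐᵒᵖ] V, Ideal.Quotient.mk (compactOperators V) (S * T) = 1 ↔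
      ∃ K, IsCompactOp K ∧ S * T = 1 - K := by
    intro S T
    rw [← map_one (Ideal.Quotient.mk _), Ideal.Quotient.eq, ← neg_mem_iff, neg_sub]
    refine ⟨fun h => ⟨_, (isCompactOp_iff_isCompactOperator _).2 h, (sub_sub_cancel _ _).symm⟩, ?_⟩
    rintro ⟨K, hK, hST⟩
    rw [hST, sub_sub_cancel]
    exact (isCompactOp_iff_isCompactOperator K).1 hK
  simp only [isUnit_iff_exists, Ideal.Quotient.mk_surjective.exists, ← map_mul, hmk,
    IsQuasiInverse]
  exact exists_congr fun S =>
    ⟨fun ⟨K₁, K₂, hK₁, hK₂, h₁, h₂⟩ => ⟨⟨K₂, hK₂, h₂⟩, K₁, hK₁, h₁⟩,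
      fun ⟨⟨K₂, hK₂, h₂⟩, K₁, hK₁, h₁⟩ => ⟨K₁, K₂, hK₁, hK₂, h₁, h₂⟩⟩

variable [SMulCommClass ℍᵐᵒᵖ ℝ V]

noncomputable def calkinAeval (T : V →L[ℍᵐᵒᵖ] V) :
    ℝ[X] →+* (V →L[ℍᵐᵒᵖ] V) ⧸ compactOperators V :=
  (Ideal.Quotient.mk _).comp (aeval T).toRingHom

theorem Qs_eq_aeval_conjQuadratic (T : V →L[ℍᵐᵒᵖ] V) {q : ℍ} {z : ℂ} (hre : q.re = z.re)
    (hnorm : ‖q‖ = ‖z‖) : Qs T q = aeval T (conjQuadratic z) := by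
  simp [Qs, conjQuadratic, hre, hnorm, Algebra.smul_def, sq]

theorem mem_essSpectrum_iff (T : V →L[ℍᵐᵒᵖ] V) {q : ℍ} {z : ℂ} (hre : q.re = z.re)
    (hnorm : ‖q‖ = ‖z‖) : q ∈ essSpectrum T ↔ ¬ IsUnit (calkinAeval T (conjQuadratic z)) := by
  rw [essSpectrum, Set.mem_ofPred_eq, exists_isQuasiInverse_iff_isUnit,
    Qs_eq_aeval_conjQuadratic T hre hnorm]
  rfl

theorem pow_mem_essSpectrum_pow_iff (T : V →L[ℍᵐᵒᵖ] V) {φ : ℂ →ₐ[ℝ] ℍ}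
    (hre : ∀ z, (φ z).re = z.re) (hnorm : ∀ z, ‖φ z‖ = ‖z‖) {ζ : ℂ} {n : ℕ}
    (hζ : IsPrimitiveRoot ζ n) (hn : 0 < n) (z : ℂ) :
    φ z ^ n ∈ essSpectrum (T ^ n) ↔ ∃ i < n, φ (ζ ^ i * z) ∈ essSpectrum T := by
  have hpow : calkinAeval (T ^ n) (conjQuadratic (z ^ n)) =
      calkinAeval T ((conjQuadratic (z ^ n)).comp (X ^ n)) := by
    simp [calkinAeval, aeval_comp]
  rw [← map_pow, mem_essSpectrum_iff (T ^ n) (hre _) (hnorm _), hpow,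
    conjQuadratic_pow_comp_X_pow hζ hn, isUnit_map_prod_iff]
  simp only [mem_essSpectrum_iff T (hre _) (hnorm _), Finset.mem_range]
  push Not
  rfl

end Calkin

theorem stmt14_general {V : Type*} [NormedAddCommGroup V] [NormedSpace ℝ V]
    [Module ℍᵐᵒᵖ V] [IsScalarTower ℝ ℍᵐᵒᵖ V] [SMulCommClass ℍᵐᵒᵖ ℝ V]
    (T : V →L[ℍᵐᵒᵖ] V) (n : ℕ) (hn : 1 ≤ n) :
    essSpectrum (T ^ n) = (fun q : ℍ => q ^ n) '' essSpectrum T := by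
  obtain ⟨ζ, hζ⟩ : ∃ ζ : ℂ, IsPrimitiveRoot ζ n := ⟨_, Complex.isPrimitiveRoot_exp n (by omega)⟩
  ext p
  constructor
  · intro hp
    obtain ⟨φ, hre, hnorm, z, rfl⟩ := Quaternion.exists_algHom_complex_isometry p
    obtain ⟨w, rfl⟩ := IsAlgClosed.exists_pow_nat_eq z hn
    rw [map_pow, pow_mem_essSpectrum_pow_iff T hre hnorm hζ hn] at hp
    obtain ⟨i, -, hi⟩ := hp
    refine ⟨_, hi, ?_⟩
    show φ (ζ ^ i * w) ^ n = φ (w ^ n)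
    rw [← map_pow, mul_pow, ← pow_mul, pow_mul', hζ.pow_eq_one, one_pow, one_mul, map_pow]
  · rintro ⟨q, hq, rfl⟩
    obtain ⟨φ, hre, hnorm, z, rfl⟩ := Quaternion.exists_algHom_complex_isometry q
    exact (pow_mem_essSpectrum_pow_iff T hre hnorm hζ hn z).2 ⟨0, hn, by simpa using hq⟩

theorem stmt14 {V : Type*} [NormedAddCommGroup V] [NormedSpace ℝ V] [CompleteSpace V]
    [Module ℍᵐᵒᵖ V] [IsScalarTower ℝ ℍᵐᵒᵖ V] [SMulCommClass ℍᵐᵒᵖ ℝ V]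
    (hnorm : ∀ (x : V) (q : ℍ), ‖op q • x‖ = ‖x‖ * ‖q‖)
    (T : V →L[ℍᵐᵒᵖ] V) (n : ℕ) (hn : 1 ≤ n) :
    essSpectrum (T ^ n) = (fun q : ℍ => q ^ n) '' essSpectrum T :=
  stmt14_general T n hn
end

section
/- Let V be a right Banach ℍ-module and T ∈ B(V). If q ∈ σ_S(T) is a right eigenvalue of finite type of T, then [q] is an isolated part of σ_S(T) (i.e., both [q] and σ_S(T) ∖ [q] are closed subsets of ℍ) and moreover N(Q_q(T)) ≠ {0}, i.e., q belongs to the point S-spectrum of T. -/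
/-!
Quaternionic setting: `ℍ` is the real quaternions.  A right Banach `ℍ`-module is
formalized as a real Banach space `V` together with a compatible `Module ℍᵐᵒᵖ V`
structure (right `ℍ`-action) satisfying `‖x • q‖ = ‖x‖ * |q|`; bounded right
`ℍ`-linear operators are the continuous `ℍᵐᵒᵖ`-linear maps `V →L[ℍᵐᵒᵖ] V`.
-/

open MulOpposite

/-!
Splitting `V = V₁ ⊕ V₂` splits every `Q_p(T)` into two diagonal blocks, and by the open mapping
theorem a bounded operator on a Banach space is invertible iff it is bijective; hence
`σ_S(T) = σ_S(T|V₁) ∪ σ_S(T|V₂)`, a disjoint union with `σ_S(T|V₁) = [q]`. So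
`σ_S(T) ∖ [q] = σ_S(T|V₂)`, which is closed because invertible operators form an open set,
while `[q]` is compact as the image of the unit sphere under `h ↦ h q h⁻¹`. Finally
`q ∈ [q] = σ_S(T|V₁)`, and on the finite-dimensional `V₁` a non-invertible `Q_q(T|V₁)` has a
nonzero kernel vector, which lies in `N(Q_q(T))`.
-/

theorem ContinuousLinearMap.isUnit_iff_bijective_of_isScalarTower {R E : Type*} [Semiring R]
    [NormedAddCommGroup E] [NormedSpace ℝ E] [CompleteSpace E] [Module R E] [SMul ℝ R]
    [IsScalarTower ℝ R E] {f : E →L[R] E} : IsUnit f ↔ Function.Bijective f := by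
  refine ⟨fun ⟨u, hu⟩ => hu ▸ (ContinuousLinearEquiv.ofUnit u).bijective, fun h => ?_⟩
  let e := LinearEquiv.ofBijective (f : E →ₗ[R] E) h
  -- the open mapping theorem over `ℝ` makes the `R`-linear inverse continuous
  let e' := e.toEquiv.toHomeomorphOfContinuousOpen f.continuous
    ((f.restrictScalars ℝ).isOpenMap h.2)
  exact ⟨ContinuousLinearEquiv.toUnit { e with
    continuous_toFun := f.continuous, continuous_invFun := e'.symm.continuous }, rfl⟩

theorem ContinuousLinearMap.ker_ne_bot_of_not_isUnit {R E : Type*} [DivisionRing R]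
    [NormedAddCommGroup E] [NormedSpace ℝ E] [CompleteSpace E] [Module R E] [SMul ℝ R]
    [IsScalarTower ℝ R E] [FiniteDimensional R E] {f : E →L[R] E} (hf : ¬ IsUnit f) :
    LinearMap.ker (f : E →ₗ[R] E) ≠ ⊥ := by
  intro hker
  have hinj : Function.Injective f := LinearMap.ker_eq_bot.mp hker
  exact hf <| isUnit_iff_bijective_of_isScalarTower.mpr
    ⟨hinj, LinearMap.injective_iff_surjective.mp hinj⟩

theorem LinearMap.bijective_iff_bijective_restrict_of_isCompl {R M : Type*} [Ring R]
    [AddCommGroup M] [Module R M] {p q : Submodule R M} (hpq : IsCompl p q) (f : M →ₗ[R] M)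
    (hp : ∀ x ∈ p, f x ∈ p) (hq : ∀ x ∈ q, f x ∈ q) :
    Function.Bijective f ↔
      Function.Bijective (f.restrict hp) ∧ Function.Bijective (f.restrict hq) := by
  let e := Submodule.prodEquivOfIsCompl p q hpq
  have hf : ⇑f ∘ e = e ∘ Prod.map (f.restrict hp) (f.restrict hq) := by
    ext x; simp [e, Submodule.coe_prodEquivOfIsCompl']
  rw [← Prod.map_bijective, ← EquivLike.comp_bijective _ e, ← hf, EquivLike.bijective_comp]

theorem smul_mul_mul_smul_inv {𝕜 A : Type*} [Field 𝕜] [DivisionRing A] [Algebra 𝕜 A]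
    (q h : A) {c : 𝕜} (hc : c ≠ 0) :
    (c • h) * q * (c • h)⁻¹ = h * q * h⁻¹ := by
  rw [smul_inv₀, smul_mul_assoc, smul_mul_assoc, mul_smul_comm, smul_smul,
    mul_inv_cancel₀ hc, one_smul]

theorem qSphere_eq_image_sphere (q : ℍ) :
    qSphere q = (fun h => h * q * h⁻¹) '' Metric.sphere 0 1 := by
  ext p
  constructor
  · rintro ⟨h, hh, rfl⟩
    exact ⟨‖h‖⁻¹ • h, by simpa using norm_smul_inv_norm (𝕜 := ℝ) hh,
      smul_mul_mul_smul_inv q h (inv_ne_zero (norm_ne_zero_iff.mpr hh))⟩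
  · rintro ⟨h, hh, rfl⟩
    exact ⟨h, ne_zero_of_mem_unit_sphere ⟨h, hh⟩, rfl⟩

theorem isCompact_qSphere (q : ℍ) : IsCompact (qSphere q) := by
  rw [qSphere_eq_image_sphere]
  refine (isCompact_sphere 0 1).image_of_continuousOn fun h hh => ?_
  have : h ≠ 0 := ne_zero_of_mem_unit_sphere ⟨h, hh⟩
  fun_prop (disch := assumption)

theorem mem_qSphere_self (q : ℍ) : q ∈ qSphere q := ⟨1, one_ne_zero, by simp⟩

theorem Qs_apply {W : Type*} [NormedAddCommGroup W] [Module ℍᵐᵒᵖ W] [Module ℝ W]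
    [SMulCommClass ℍᵐᵒᵖ ℝ W] [ContinuousConstSMul ℝ W] (T : W →L[ℍᵐᵒᵖ] W) (p : ℍ) (x : W) :
    Qs T p x = T (T x) - (2 * p.re) • T x + ‖p‖ ^ 2 • x :=
  rfl

theorem ker_ne_bot_of_ker_restrictOp_ne_bot {V : Type*} [NormedAddCommGroup V]
    [Module ℍᵐᵒᵖ V] {A : V →L[ℍᵐᵒᵖ] V} {M : Submodule ℍᵐᵒᵖ V}
    {hA : ∀ x ∈ M, A x ∈ M} (h : LinearMap.ker (restrictOp A M hA : M →ₗ[ℍᵐᵒᵖ] M) ≠ ⊥) :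
    LinearMap.ker (A : V →ₗ[ℍᵐᵒᵖ] V) ≠ ⊥ := by
  contrapose! h
  rw [LinearMap.ker_eq_bot] at h ⊢
  exact fun x y hxy => Subtype.ext (h (congrArg Subtype.val hxy))

section Restriction

variable {V : Type*} [NormedAddCommGroup V] [NormedSpace ℝ V]
  [Module ℍᵐᵒᵖ V] [IsScalarTower ℝ ℍᵐᵒᵖ V]

theorem isUnit_iff_isUnit_restrictOp [CompleteSpace V] {M₁ M₂ : Submodule ℍᵐᵒᵖ V}
    (hc : IsCompl M₁ M₂) (hM₁ : IsClosed (M₁ : Set V)) (hM₂ : IsClosed (M₂ : Set V))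
    {A : V →L[ℍᵐᵒᵖ] V} (hA₁ : ∀ x ∈ M₁, A x ∈ M₁) (hA₂ : ∀ x ∈ M₂, A x ∈ M₂) :
    IsUnit A ↔ IsUnit (restrictOp A M₁ hA₁) ∧ IsUnit (restrictOp A M₂ hA₂) := by
  have := hM₁.completeSpace_coe
  have := hM₂.completeSpace_coe
  simp only [ContinuousLinearMap.isUnit_iff_bijective_of_isScalarTower]
  exact (A : V →ₗ[ℍᵐᵒᵖ] V).bijective_iff_bijective_restrict_of_isCompl hc hA₁ hA₂

variable [SMulCommClass ℍᵐᵒᵖ ℝ V]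

theorem isOpen_sResolvent [CompleteSpace V] (T : V →L[ℍᵐᵒᵖ] V) : IsOpen (sResolvent T) := by
  have hres : sResolvent T = (fun q : ℍ => (Qs T q).restrictScalars ℝ) ⁻¹' {A | IsUnit A} := by
    ext q
    simp [sResolvent, ContinuousLinearMap.isUnit_iff_bijective_of_isScalarTower]
  have hQs : (fun q : ℍ => (Qs T q).restrictScalars ℝ) = fun q : ℍ =>
      (T * T).restrictScalars ℝ - (2 * q.re) • T.restrictScalars ℝ + ‖q‖ ^ 2 • 1 := rfl
  have hre : Continuous fun q : ℍ => q.re := Quaternion.continuous_re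
  rw [hres, hQs]
  exact Units.isOpen.preimage (by fun_prop)

theorem isClosed_sSpectrum [CompleteSpace V] (T : V →L[ℍᵐᵒᵖ] V) : IsClosed (sSpectrum T) :=
  (isOpen_sResolvent T).isClosed_compl

theorem Qs_mem_of_mem {T : V →L[ℍᵐᵒᵖ] V} {M : Submodule ℍᵐᵒᵖ V} (hT : ∀ x ∈ M, T x ∈ M)
    (p : ℍ) {x : V} (hx : x ∈ M) : Qs T p x ∈ M := by
  rw [Qs_apply]
  exact M.add_mem (M.sub_mem (hT _ (hT _ hx)) (M.smul_of_tower_mem _ (hT _ hx)))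
    (M.smul_of_tower_mem _ hx)

theorem Qs_restrictOp {T : V →L[ℍᵐᵒᵖ] V} {M : Submodule ℍᵐᵒᵖ V} (hT : ∀ x ∈ M, T x ∈ M)
    (p : ℍ) : Qs (restrictOp T M hT) p = restrictOp (Qs T p) M fun _ => Qs_mem_of_mem hT p :=
  rfl

theorem sSpectrum_eq_union_restrictOp [CompleteSpace V] {M₁ M₂ : Submodule ℍᵐᵒᵖ V}
    (hc : IsCompl M₁ M₂) (hM₁ : IsClosed (M₁ : Set V)) (hM₂ : IsClosed (M₂ : Set V))
    {T : V →L[ℍᵐᵒᵖ] V} (hT₁ : ∀ x ∈ M₁, T x ∈ M₁) (hT₂ : ∀ x ∈ M₂, T x ∈ M₂) :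
    sSpectrum T = sSpectrum (restrictOp T M₁ hT₁) ∪ sSpectrum (restrictOp T M₂ hT₂) := by
  ext p
  simp only [sSpectrum, Set.mem_ofPred_eq, Set.mem_union, Qs_restrictOp,
    isUnit_iff_isUnit_restrictOp hc hM₁ hM₂ (fun _ => Qs_mem_of_mem hT₁ p)
      (fun _ => Qs_mem_of_mem hT₂ p)]
  tauto

end Restriction

theorem stmt18_general {V : Type*} [NormedAddCommGroup V] [NormedSpace ℝ V] [CompleteSpace V]
    [Module ℍᵐᵒᵖ V] [IsScalarTower ℝ ℍᵐᵒᵖ V] [SMulCommClass ℍᵐᵒᵖ ℝ V]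
    (T : V →L[ℍᵐᵒᵖ] V) (q : ℍ)
    (hft : IsFiniteTypeEigenvalue T q) :
    IsClosed (qSphere q) ∧ IsClosed (sSpectrum T \ qSphere q) ∧
      LinearMap.ker (Qs T q : V →ₗ[ℍᵐᵒᵖ] V) ≠ ⊥ := by
  obtain ⟨M₁, M₂, h₁, h₂, hM₁, hM₂, hc, hfd, hdisj, hsph⟩ := hft
  have := hM₁.completeSpace_coe
  have := hM₂.completeSpace_coe
  refine ⟨(isCompact_qSphere q).isClosed, ?_, ?_⟩
  · have hdiff : sSpectrum T \ qSphere q = sSpectrum (restrictOp T M₂ h₂) := by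
      rw [sSpectrum_eq_union_restrictOp hc hM₁ hM₂ h₁ h₂, hsph, Set.union_sdiff_left]
      exact (Set.disjoint_iff_inter_eq_empty.mpr (hsph ▸ hdisj)).symm.sdiff_eq_left
    exact hdiff ▸ isClosed_sSpectrum _
  · have hq : q ∈ sSpectrum (restrictOp T M₁ h₁) := hsph ▸ mem_qSphere_self q
    rw [sSpectrum, Set.mem_ofPred_eq, Qs_restrictOp] at hq
    exact ker_ne_bot_of_ker_restrictOp_ne_bot (ContinuousLinearMap.ker_ne_bot_of_not_isUnit hq)

theorem stmt18 {V : Type*} [NormedAddCommGroup V] [NormedSpace ℝ V] [CompleteSpace V]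
    [Module ℍᵐᵒᵖ V] [IsScalarTower ℝ ℍᵐᵒᵖ V] [SMulCommClass ℍᵐᵒᵖ ℝ V]
    (hnorm : ∀ (x : V) (q : ℍ), ‖op q • x‖ = ‖x‖ * ‖q‖)
    (T : V →L[ℍᵐᵒᵖ] V) (q : ℍ) (hq : q ∈ sSpectrum T)
    (hft : IsFiniteTypeEigenvalue T q) :
    IsClosed (qSphere q) ∧ IsClosed (sSpectrum T \ qSphere q) ∧
      LinearMap.ker (Qs T q : V →ₗ[ℍᵐᵒᵖ] V) ≠ ⊥ :=
  stmt18_general T q hft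
end
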